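/- Let S and A be finite nonempty types, T : S → A → S → ℝ a transition kernel (T s a s' ≥ 0 and ∑_{s'} T s a s' = 1 for all s, a), R : S → A → S → ℝ a reward function, and γ ∈ [0,1). If Q₁ : S → A → ℝ and Q₂ : S → A → ℝ both satisfy the Bellman optimality equation for reward R, then Q₁ = Q₂; that is, the Bellman optimality equation has at most one solution. -/
import Mathlib


/-- Maximum of a real-valued function over a finite nonempty type,
taken as `Finset.max'` over `Finset.univ`. -/
noncomputable def fmax {A : Type*} [Fintype A] [Nonempty A] (f : A → ℝ) : ℝ :=
  (Finset.univ.image f).max' (Finset.univ_nonempty.image f)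

lemma le_fmax {A : Type*} [Fintype A] [Nonempty A] (f : A → ℝ) (a : A) :
    f a ≤ fmax f :=
  Finset.le_max' _ _ (Finset.mem_image_of_mem f (Finset.mem_univ a))

lemma fmax_le {A : Type*} [Fintype A] [Nonempty A] {f : A → ℝ} {b : ℝ}
    (h : ∀ a, f a ≤ b) : fmax f ≤ b := by
  apply Finset.max'_le
  intro y hy
  obtain ⟨a, _, rfl⟩ := Finset.mem_image.mp hy
  exact h a

lemma abs_fmax_sub_fmax_le {A : Type*} [Fintype A] [Nonempty A]
    {f g : A → ℝ} {M : ℝ} (h : ∀ a, |f a - g a| ≤ M) :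
    |fmax f - fmax g| ≤ M := by
  have h1 : ∀ a, f a - g a ≤ M := fun a => (abs_sub_le_iff.mp (h a)).1
  have h2 : ∀ a, g a - f a ≤ M := fun a => (abs_sub_le_iff.mp (h a)).2
  rw [abs_sub_le_iff]
  constructor
  · have : fmax f ≤ fmax g + M := fmax_le fun a => by linarith [h1 a, le_fmax g a]
    linarith
  · have : fmax g ≤ fmax f + M := fmax_le fun a => by linarith [h2 a, le_fmax f a]
    linarith

/-- For a discount factor `γ ∈ [0,1)`, the Bellman optimality equation has at
most one solution. -/
theorem bellman_solution_unique
    {S A : Type*} [Fintype S] [Nonempty S] [Fintype A] [Nonempty A]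
    (T : S → A → S → ℝ) (hT0 : ∀ s a s', 0 ≤ T s a s')
    (hT1 : ∀ s a, ∑ s', T s a s' = 1)
    (R : S → A → S → ℝ) (γ : ℝ) (hγ0 : 0 ≤ γ) (hγ1 : γ < 1)
    (Q₁ Q₂ : S → A → ℝ)
    (hQ₁ : ∀ s a, Q₁ s a =
      ∑ s', T s a s' * (R s a s' + γ * fmax (fun a' => Q₁ s' a')))
    (hQ₂ : ∀ s a, Q₂ s a =
      ∑ s', T s a s' * (R s a s' + γ * fmax (fun a' => Q₂ s' a'))) :
    Q₁ = Q₂ := by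
  set M : ℝ := Finset.univ.sup' Finset.univ_nonempty
    (fun p : S × A => |Q₁ p.1 p.2 - Q₂ p.1 p.2|) with hM
  have hle : ∀ s a, |Q₁ s a - Q₂ s a| ≤ M := fun s a =>
    Finset.le_sup' (f := fun p : S × A => |Q₁ p.1 p.2 - Q₂ p.1 p.2|)
      (Finset.mem_univ (s, a))
  have hM0 : 0 ≤ M := by
    obtain ⟨s⟩ := ‹Nonempty S›; obtain ⟨a⟩ := ‹Nonempty A›
    exact le_trans (abs_nonneg _) (hle s a)
  have key : ∀ s a, |Q₁ s a - Q₂ s a| ≤ γ * M := by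
    intro s a
    have heq : Q₁ s a - Q₂ s a =
        ∑ s', T s a s' * (γ * (fmax (fun a' => Q₁ s' a') - fmax (fun a' => Q₂ s' a'))) := by
      rw [hQ₁ s a, hQ₂ s a, ← Finset.sum_sub_distrib]
      apply Finset.sum_congr rfl
      intro s' _
      ring
    rw [heq]
    calc |∑ s', T s a s' * (γ * (fmax (fun a' => Q₁ s' a') - fmax (fun a' => Q₂ s' a')))|
        ≤ ∑ s', |T s a s' * (γ * (fmax (fun a' => Q₁ s' a') - fmax (fun a' => Q₂ s' a')))| :=
          Finset.abs_sum_le_sum_abs _ _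
      _ ≤ ∑ s', T s a s' * (γ * M) := by
          apply Finset.sum_le_sum
          intro s' _
          rw [abs_mul, abs_mul, abs_of_nonneg (hT0 s a s'), abs_of_nonneg hγ0]
          apply mul_le_mul_of_nonneg_left _ (hT0 s a s')
          apply mul_le_mul_of_nonneg_left _ hγ0
          exact abs_fmax_sub_fmax_le (fun a' => hle s' a')
      _ = γ * M := by rw [← Finset.sum_mul, hT1 s a, one_mul]
  have hMγ : M ≤ γ * M := by
    rw [hM]
    apply Finset.sup'_le
    intro p _
    exact key p.1 p.2
  have hM0' : M ≤ 0 := by nlinarith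
  funext s a
  have := hle s a
  have : |Q₁ s a - Q₂ s a| = 0 := le_antisymm (le_trans this hM0') (abs_nonneg _)
  have := abs_eq_zero.mp this
  linarith
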